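/- arXiv:1509.08813 — 2 statements merged into one kernel-verified Lean document; each statement's English description precedes it below -/
import Mathlib

section
/- Every transitive compact dynamical system (X,T) that is not proximal is thickly sensitive. -/
open Filter Topology Set Metric

section Defs

variable {X : Type*}

/-- A set is "opene" if it is open and nonempty. -/
def Opene [TopologicalSpace X] (U : Set X) : Prop := IsOpen U ∧ U.Nonempty

/-- `N_T(U,V) = {n ∈ ℕ : U ∩ T⁻ⁿV ≠ ∅}`. -/
def NTset (T : X → X) (U V : Set X) : Set ℕ := {n | (U ∩ T^[n] ⁻¹' V).Nonempty}

/-- `N_T(x,G) = {n ∈ ℕ : Tⁿx ∈ G}`. -/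
def NTpt (T : X → X) (x : X) (G : Set X) : Set ℕ := {n | T^[n] x ∈ G}

/-- `ω_{N_T}(x)`. -/
def omegaNT [TopologicalSpace X] (T : X → X) (x : X) : Set X :=
  {z | ∀ G : Set X, IsOpen G → z ∈ G → ∀ U V : Set X, Opene U → Opene V →
    (NTpt T x G ∩ NTset T U V).Nonempty}

/-- The ω-limit set `ω_T(x)`. -/
def omegaT [TopologicalSpace X] (T : X → X) (x : X) : Set X :=
  {z | ∀ G : Set X, IsOpen G → z ∈ G → (NTpt T x G).Infinite}

/-- Transitive compact system. -/
def TransCompact [TopologicalSpace X] (T : X → X) : Prop :=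
  ∀ x : X, (omegaNT T x).Nonempty

/-- Topologically transitive system. -/
def TopTransitive [TopologicalSpace X] (T : X → X) : Prop :=
  ∀ U V : Set X, Opene U → Opene V → (NTset T U V).Nonempty

/-- Weakly mixing: the product system `(X×X, T×T)` is topologically transitive. -/
def WeaklyMixing [TopologicalSpace X] (T : X → X) : Prop :=
  TopTransitive (fun p : X × X => (T p.1, T p.2))

/-- Totally transitive: `(X, T^k)` is transitive for every `k ≥ 1`. -/
def TotallyTransitive [TopologicalSpace X] (T : X → X) : Prop :=
  ∀ k : ℕ, 1 ≤ k → TopTransitive (T^[k])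

/-- Minimal system: every point has dense orbit. -/
def MinimalSystem [TopologicalSpace X] (T : X → X) : Prop :=
  ∀ x : X, Dense (Set.range fun n : ℕ => T^[n] x)

/-- A minimal subset: nonempty, closed, `T M = M`, with no proper nonempty closed invariant subset. -/
def IsMinimalSubset [TopologicalSpace X] (T : X → X) (M : Set X) : Prop :=
  M.Nonempty ∧ IsClosed M ∧ T '' M = M ∧
    ∀ M' : Set X, M' ⊆ M → M'.Nonempty → IsClosed M' → T '' M' = M' → M' = M

/-- A minimal point: one that lies in some minimal subset. -/
def IsMinimalPoint [TopologicalSpace X] (T : X → X) (x : X) : Prop :=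
  ∃ M : Set X, IsMinimalSubset T M ∧ x ∈ M

/-- An M-system: transitive with a dense set of minimal points. -/
def MSystem [TopologicalSpace X] (T : X → X) : Prop :=
  TopTransitive T ∧ Dense {x : X | IsMinimalPoint T x}

/-- Thick subset of ℕ. -/
def ThickSet (S : Set ℕ) : Prop := ∀ N : ℕ, ∃ m : ℕ, ∀ i ≤ N, m + i ∈ S

/-- Syndetic subset of ℕ. -/
def SyndeticSet (S : Set ℕ) : Prop := ∃ N : ℕ, ∀ i : ℕ, ∃ j ≤ N, i + j ∈ S

/-- Thickly syndetic subset of ℕ. -/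
def ThicklySyndeticSet (S : Set ℕ) : Prop :=
  ∀ N : ℕ, SyndeticSet {m : ℕ | ∀ i ≤ N, m + i ∈ S}

/-- `S_T(U,δ)`. -/
def STset [MetricSpace X] (T : X → X) (U : Set X) (δ : ℝ) : Set ℕ :=
  {n | ∃ x ∈ U, ∃ y ∈ U, δ < dist (T^[n] x) (T^[n] y)}

/-- Thickly sensitive system. -/
def ThicklySensitive [MetricSpace X] (T : X → X) : Prop :=
  ∃ δ : ℝ, 0 < δ ∧ ∀ U : Set X, Opene U → ThickSet (STset T U δ)

/-- Thickly syndetically sensitive system. -/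
def ThicklySyndeticallySensitive [MetricSpace X] (T : X → X) : Prop :=
  ∃ δ : ℝ, 0 < δ ∧ ∀ U : Set X, Opene U → ThicklySyndeticSet (STset T U δ)

/-- Multi-sensitive system. -/
def MultiSensitive [MetricSpace X] (T : X → X) : Prop :=
  ∃ δ : ℝ, 0 < δ ∧ ∀ (k : ℕ) (U : Fin (k + 1) → Set X), (∀ i, Opene (U i)) →
    (⋂ i, STset T (U i) δ).Nonempty

/-- Thickly syndetically transitive system. -/
def ThicklySyndeticallyTransitive [TopologicalSpace X] (T : X → X) : Prop :=
  ∀ U V : Set X, Opene U → Opene V → ThicklySyndeticSet (NTset T U V)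

/-- A proximal pair: `liminf d(Tⁿx,Tⁿy) = 0`. -/
def ProximalPair [MetricSpace X] (T : X → X) (x y : X) : Prop :=
  liminf (fun n : ℕ => dist (T^[n] x) (T^[n] y)) atTop = 0

/-- A proximal system: every pair of points is proximal. -/
def ProximalSystem [MetricSpace X] (T : X → X) : Prop :=
  ∀ x y : X, ProximalPair T x y

/-- The proximal cell of `x`. -/
def ProxCell [MetricSpace X] (T : X → X) (x : X) : Set X :=
  {y | ProximalPair T x y}

/-- Li-Yorke sensitivity. -/
def LiYorkeSensitive [MetricSpace X] (T : X → X) : Prop :=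
  ∃ δ : ℝ, 0 < δ ∧ ∀ x : X, ∀ U ∈ 𝓝 x, ∃ y ∈ U,
    liminf (fun n : ℕ => dist (T^[n] x) (T^[n] y)) atTop = 0 ∧
    δ < limsup (fun n : ℕ => dist (T^[n] x) (T^[n] y)) atTop

/-- Spatio-temporally chaotic system. -/
def SpatioTemporallyChaotic [MetricSpace X] (T : X → X) : Prop :=
  ∀ x : X, ∀ U ∈ 𝓝 x, ∃ y ∈ U,
    liminf (fun n : ℕ => dist (T^[n] x) (T^[n] y)) atTop = 0 ∧
    0 < limsup (fun n : ℕ => dist (T^[n] x) (T^[n] y)) atTop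

/-- A distal point: not proximal to any other point of its orbit closure. -/
def IsDistalPoint [MetricSpace X] (T : X → X) (x : X) : Prop :=
  ∀ y ∈ closure (Set.range fun n : ℕ => T^[n] x), y ≠ x →
    0 < liminf (fun n : ℕ => dist (T^[n] x) (T^[n] y)) atTop

/-- The Lyapunov number `𝕃_r`. -/
noncomputable def LyapR [MetricSpace X] (T : X → X) : ℝ :=
  sSup {δ : ℝ | 0 < δ ∧ ∀ x : X, ∀ U : Set X, IsOpen U → x ∈ U →
    ∃ y ∈ U, ∃ n : ℕ, δ < dist (T^[n] x) (T^[n] y)}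

/-- The Lyapunov number `𝕃̄_r`. -/
noncomputable def LyapRbar [MetricSpace X] (T : X → X) : ℝ :=
  sSup {δ : ℝ | 0 < δ ∧ ∀ x : X, ∀ U : Set X, IsOpen U → x ∈ U →
    ∃ y ∈ U, δ < limsup (fun n : ℕ => dist (T^[n] x) (T^[n] y)) atTop}

/-- `min_{1≤i≤k} d(Tⁿ xᵢ, Tⁿ yᵢ)`. -/
noncomputable def minDist [MetricSpace X] (T : X → X) {k : ℕ}
    (x y : Fin (k + 1) → X) (n : ℕ) : ℝ :=
  Finset.univ.inf' Finset.univ_nonempty (fun i => dist (T^[n] (x i)) (T^[n] (y i)))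

/-- The Lyapunov number `𝕃_{m,r}`. -/
noncomputable def LyapMR [MetricSpace X] (T : X → X) : ℝ :=
  sSup {δ : ℝ | 0 < δ ∧ ∀ (k : ℕ) (x : Fin (k + 1) → X) (U : Fin (k + 1) → Set X),
    (∀ i, IsOpen (U i) ∧ x i ∈ U i) →
    ∃ y : Fin (k + 1) → X, (∀ i, y i ∈ U i) ∧ ∃ n : ℕ, δ < minDist T x y n}

/-- The Lyapunov number `𝕃̄_{m,r}`. -/
noncomputable def LyapMRbar [MetricSpace X] (T : X → X) : ℝ :=
  sSup {δ : ℝ | 0 < δ ∧ ∀ (k : ℕ) (x : Fin (k + 1) → X) (U : Fin (k + 1) → Set X),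
    (∀ i, IsOpen (U i) ∧ x i ∈ U i) →
    ∃ y : Fin (k + 1) → X, (∀ i, y i ∈ U i) ∧
      δ < limsup (fun n : ℕ => minDist T x y n) atTop}

/-- The Lyapunov number `𝕃_{m,d}`. -/
noncomputable def LyapMD [MetricSpace X] (T : X → X) : ℝ :=
  sSup {δ : ℝ | 0 < δ ∧ ∀ (k : ℕ) (U : Fin (k + 1) → Set X), (∀ i, Opene (U i)) →
    ∃ x y : Fin (k + 1) → X, (∀ i, x i ∈ U i ∧ y i ∈ U i) ∧ ∃ n : ℕ, δ < minDist T x y n}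

/-- The Lyapunov number `𝕃̄_{m,d}`. -/
noncomputable def LyapMDbar [MetricSpace X] (T : X → X) : ℝ :=
  sSup {δ : ℝ | 0 < δ ∧ ∀ (k : ℕ) (U : Fin (k + 1) → Set X), (∀ i, Opene (U i)) →
    ∃ x y : Fin (k + 1) → X, (∀ i, x i ∈ U i ∧ y i ∈ U i) ∧
      δ < limsup (fun n : ℕ => minDist T x y n) atTop}

/-- `(k,T,ε)`-separated set with respect to the sequence `ns` (with `ns 0 = 0` by convention). -/
def IsSepSet [MetricSpace X] (T : X → X) (ns : ℕ → ℕ) (k : ℕ) (ε : ℝ) (E : Set X) : Prop :=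
  ∀ x ∈ E, ∀ y ∈ E, x ≠ y → ∃ j < k, ε < dist (T^[ns j] x) (T^[ns j] y)

/-- `sep(k,T,ε)`: maximal cardinality of a `(k,T,ε)`-separated set. -/
noncomputable def sepNum [MetricSpace X] (T : X → X) (ns : ℕ → ℕ) (k : ℕ) (ε : ℝ) : ℕ :=
  sSup {r : ℕ | ∃ E : Finset X, IsSepSet T ns k ε ↑E ∧ E.card = r}

/-- Topological sequence entropy along `ns`:
`h_N(T) = lim_{ε→0} limsup_{k→∞} (1/k) log sep(k,T,ε)` (the limit as `ε → 0⁺` of the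
nonincreasing-in-`ε` quantity, i.e. the supremum over `ε > 0`). -/
noncomputable def seqEntropy [MetricSpace X] (T : X → X) (ns : ℕ → ℕ) : EReal :=
  ⨆ (ε : ℝ) (_ : 0 < ε),
    limsup (fun k : ℕ => ((Real.log (sepNum T ns k ε) / k : ℝ) : EReal)) atTop

end Defs

/-!
Let `Ω*` be the set of points lying, for every opene `U`, in the closure of
`⋃_{x ∈ U} ω_{N_T}(x)`. It is nonempty by compactness and transitivity, closed and `T`-invariant.
If every point of `Ω*` came arbitrarily close, along the orbits, to every point of `X`, the system
would be proximal. Otherwise some `c ∈ Ω*` and `b ∈ X` have orbits staying `ε` apart. As `c` is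
approximated by `ω_{N_T}(x)` for some `x ∈ U`, the definition of `ω_{N_T}` yields a time at which
the orbits of two points of `U` shadow those of `c` and `b` for `N` steps, so `S_T(U, ε/2)` is
thick.
-/

lemma succ_mem_NTset {X : Type*} {T : X → X} {U V : Set X} {n : ℕ}
    (h : n ∈ NTset T U (T ⁻¹' V)) : n + 1 ∈ NTset T U V := by
  obtain ⟨w, hwU, hwV⟩ := h
  exact ⟨w, hwU, by rwa [mem_preimage, Function.iterate_succ_apply']⟩

section OmegaStar

variable {X : Type*} [TopologicalSpace X] {T : X → X}

lemma Opene.preimage (hTc : Continuous T) (hTs : Function.Surjective T) {V : Set X}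
    (hV : Opene V) : Opene (T ⁻¹' V) :=
  ⟨hV.1.preimage hTc, hV.2.preimage hTs⟩

lemma mapsTo_omegaNT (hTc : Continuous T) (hTs : Function.Surjective T) (x : X) :
    MapsTo T (omegaNT T x) (omegaNT T x) := by
  intro z hz G hG hzG U V hU hV
  obtain ⟨n, hnx, hnUV⟩ :=
    hz (T ⁻¹' G) (hG.preimage hTc) hzG U (T ⁻¹' V) hU (hV.preimage hTc hTs)
  exact ⟨n + 1, by rwa [NTpt, mem_ofPred_eq, Function.iterate_succ_apply'], succ_mem_NTset hnUV⟩

lemma omegaNT_apply_subset (hTc : Continuous T) (hTs : Function.Surjective T) (x : X) :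
    omegaNT T (T x) ⊆ omegaNT T x := by
  intro z hz G hG hzG U V hU hV
  obtain ⟨n, hnx, hnUV⟩ := hz G hG hzG U (T ⁻¹' V) hU (hV.preimage hTc hTs)
  exact ⟨n + 1, hnx, succ_mem_NTset hnUV⟩

lemma omegaNT_iterate_subset (hTc : Continuous T) (hTs : Function.Surjective T) (k : ℕ)
    (x : X) : omegaNT T (T^[k] x) ⊆ omegaNT T x := by
  induction k generalizing x with
  | zero => exact subset_rfl
  | succ k ih => exact (ih (T x)).trans (omegaNT_apply_subset hTc hTs x)

lemma TransCompact.topTransitive [Nonempty X] (htc : TransCompact T) : TopTransitive T :=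
  fun U V hU hV =>
    let ⟨_, hz⟩ := htc (Classical.arbitrary X)
    (hz univ isOpen_univ (mem_univ _) U V hU hV).mono inter_subset_right

lemma TopTransitive.exists_mem_forall_iterate_mem (hT : TopTransitive T) (hTc : Continuous T)
    {ι : Type*} (s : Finset ι) {U : ι → Set X} (hU : ∀ i, Opene (U i)) {W : Set X}
    (hW : Opene W) : ∃ x ∈ W, ∀ i ∈ s, ∃ m, T^[m] x ∈ U i := by
  classical
  induction s using Finset.induction_on generalizing W with
  | empty => exact ⟨_, hW.2.some_mem, by simp⟩
  | insert i s _ ih =>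
    obtain ⟨n, hn⟩ := hT W (U i) hW (hU i)
    obtain ⟨x, ⟨hxW, hxU⟩, hx⟩ := ih ⟨hW.1.inter ((hU i).1.preimage (hTc.iterate n)), hn⟩
    exact ⟨x, hxW, Finset.forall_mem_insert _ _ _ |>.2 ⟨⟨n, hxU⟩, hx⟩⟩

def omegaStar (T : X → X) : Set X :=
  ⋂ U : {U : Set X // Opene U}, closure (⋃ x ∈ (U : Set X), omegaNT T x)

lemma isClosed_omegaStar : IsClosed (omegaStar T) :=
  isClosed_iInter fun _ => isClosed_closure

lemma mapsTo_omegaStar (hTc : Continuous T) (hTs : Function.Surjective T) :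
    MapsTo T (omegaStar T) (omegaStar T) :=
  mapsTo_iInter_iInter fun _ =>
    (mapsTo_iUnion₂_iUnion₂ fun x _ => mapsTo_omegaNT hTc hTs x).closure hTc

lemma TransCompact.omegaStar_nonempty [CompactSpace X] [Nonempty X] (hTc : Continuous T)
    (hTs : Function.Surjective T) (htc : TransCompact T) : (omegaStar T).Nonempty := by
  obtain ⟨z, -, hz⟩ := isCompact_univ.inter_iInter_nonempty
      (fun U : {U : Set X // Opene U} => closure (⋃ x ∈ (U : Set X), omegaNT T x))
      (fun _ => isClosed_closure) fun s => by
    obtain ⟨x, -, hx⟩ := htc.topTransitive.exists_mem_forall_iterate_mem hTc s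
        (U := Subtype.val) (fun U => U.2) ⟨isOpen_univ, univ_nonempty⟩
    choose! m hm using hx
    obtain ⟨z, hz⟩ := htc (T^[s.sup m] x)
    refine ⟨z, mem_univ z, mem_iInter₂.2 fun U hU => subset_closure (mem_biUnion (hm U hU) ?_)⟩
    rw [← Nat.sub_add_cancel (Finset.le_sup hU), Function.iterate_add_apply] at hz
    exact omegaNT_iterate_subset hTc hTs _ _ hz
  exact ⟨z, hz⟩

end OmegaStar

lemma liminf_eq_zero_of_frequently_lt {ι : Type*} {f : Filter ι} {u : ι → ℝ}
    (hu : ∀ i, 0 ≤ u i) (h : ∀ ε > 0, ∃ᶠ i in f, u i < ε) : liminf u f = 0 := by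
  refine le_antisymm (le_of_forall_pos_le_add fun ε hε => ?_)
    (le_liminf_of_le (.of_frequently_le ((h 1 one_pos).mono fun _ => le_of_lt)) (.of_forall hu))
  simpa using
    liminf_le_of_frequently_le ((h ε hε).mono fun _ => le_of_lt) (isBoundedUnder_of ⟨0, hu⟩)

section MetricSpace

variable {X : Type*} [MetricSpace X] {T : X → X}

/-- Follow `a ∈ S` along times at which its orbit is close to that of `x`: a limit point `p ∈ S`
of these is also a limit point of the orbit of `x`, and the orbit of `p` comes close to that of
the corresponding limit point of the orbit of `y`. -/
lemma exists_dist_iterate_lt_of_mapsTo [CompactSpace X] (hTc : Continuous T) {S : Set X}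
    (hS : IsClosed S) (hST : MapsTo T S S) {a : X} (ha : a ∈ S)
    (hP : ∀ c ∈ S, ∀ b, ∀ ε > 0, ∃ n, dist (T^[n] c) (T^[n] b) < ε) (x y : X) {ε : ℝ}
    (hε : 0 < ε) : ∃ n, dist (T^[n] x) (T^[n] y) < ε := by
  choose g hg using fun k : ℕ => hP a ha x (1 / (k + 1)) Nat.one_div_pos_of_nat
  have hgx : Tendsto (fun k => dist (T^[g k] a) (T^[g k] x)) atTop (𝓝 0) :=
    squeeze_zero (fun _ => dist_nonneg) (fun k => (hg k).le)
      tendsto_one_div_add_atTop_nhds_zero_nat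
  obtain ⟨⟨p, q⟩, -, φ, hφ, hpq⟩ :=
    isCompact_univ.tendsto_subseq (x := fun k => (T^[g k] a, T^[g k] y)) fun _ => mem_univ _
  have hp : Tendsto (fun k => T^[g (φ k)] a) atTop (𝓝 p) := (continuous_fst.tendsto _).comp hpq
  have hq : Tendsto (fun k => T^[g (φ k)] y) atTop (𝓝 q) := (continuous_snd.tendsto _).comp hpq
  have hpx : Tendsto (fun k => T^[g (φ k)] x) atTop (𝓝 p) :=
    hp.congr_dist (hgx.comp hφ.tendsto_atTop)
  have hpS : p ∈ S := hS.mem_of_tendsto hp (.of_forall fun _ => hST.iterate _ ha)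
  obtain ⟨m, hm⟩ := hP p hpS q ε hε
  have hlim :=
    (((hTc.iterate m).tendsto p).comp hpx).dist (((hTc.iterate m).tendsto q).comp hq)
  obtain ⟨k, hk⟩ := (hlim.eventually_lt_const hm).exists
  exact ⟨m + g (φ k), by rw [Function.iterate_add_apply, Function.iterate_add_apply]; exact hk⟩

lemma proximalSystem_of_mapsTo [CompactSpace X] (hTc : Continuous T) {S : Set X}
    (hS : IsClosed S) (hST : MapsTo T S S) (hne : S.Nonempty)
    (hP : ∀ c ∈ S, ∀ b, ∀ ε > 0, ∃ n, dist (T^[n] c) (T^[n] b) < ε) : ProximalSystem T := by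
  obtain ⟨a, ha⟩ := hne
  intro x y
  refine liminf_eq_zero_of_frequently_lt (fun _ => dist_nonneg) fun ε hε =>
    frequently_atTop.2 fun M => ?_
  obtain ⟨n, hn⟩ := exists_dist_iterate_lt_of_mapsTo hTc hS hST ha hP (T^[M] x) (T^[M] y) hε
  exact ⟨n + M, le_add_self, by simpa only [Function.iterate_add_apply] using hn⟩

lemma thickSet_STset_of_mem_closure (hTc : Continuous T) {U : Set X} (hU : Opene U) {c b : X}
    (hc : c ∈ closure (⋃ x ∈ U, omegaNT T x)) {ε : ℝ} (hε : 0 < ε)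
    (hcb : ∀ n, ε ≤ dist (T^[n] c) (T^[n] b)) : ThickSet (STset T U (ε / 2)) := by
  intro N
  let shadow (p : X) : Set X := ⋂ i ∈ Finset.Iic N, T^[i] ⁻¹' ball (T^[i] p) (ε / 4)
  have hshadow (p : X) : IsOpen (shadow p) ∧ p ∈ shadow p :=
    ⟨isOpen_biInter_finset fun i _ => isOpen_ball.preimage (hTc.iterate i),
      mem_iInter₂.2 fun i _ => mem_ball_self (by positivity)⟩
  obtain ⟨z, hzc, hz⟩ := mem_closure_iff.1 hc (shadow c) (hshadow c).1 (hshadow c).2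
  obtain ⟨x, hxU, hzx⟩ := mem_iUnion₂.1 hz
  obtain ⟨m, hxm, w, hwU, hwm⟩ :=
    hzx _ (hshadow c).1 hzc U (shadow b) hU ⟨(hshadow b).1, b, (hshadow b).2⟩
  refine ⟨m, fun i hi => ⟨x, hxU, w, hwU, ?_⟩⟩
  have hx : dist (T^[i] (T^[m] x)) (T^[i] c) < ε / 4 :=
    mem_iInter₂.1 hxm i (Finset.mem_Iic.2 hi)
  have hw : dist (T^[i] (T^[m] w)) (T^[i] b) < ε / 4 :=
    mem_iInter₂.1 hwm i (Finset.mem_Iic.2 hi)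
  rw [add_comm, Function.iterate_add_apply, Function.iterate_add_apply]
  linarith [hcb i, dist_triangle4 (T^[i] c) (T^[i] (T^[m] x)) (T^[i] (T^[m] w)) (T^[i] b),
    dist_comm (T^[i] c) (T^[i] (T^[m] x))]

end MetricSpace

theorem stmt1_general {X : Type*} [MetricSpace X] [CompactSpace X]
    {T : X → X} (hTc : Continuous T) (hTs : Function.Surjective T)
    (htc : TransCompact T) (hnp : ¬ ProximalSystem T) :
    ThicklySensitive T := by
  have : Nonempty X := by
    by_contra h
    exact hnp fun x => (h ⟨x⟩).elim
  by_cases hP : ∀ c ∈ omegaStar T, ∀ b, ∀ ε > 0, ∃ n, dist (T^[n] c) (T^[n] b) < ε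
  · exact absurd (proximalSystem_of_mapsTo hTc isClosed_omegaStar (mapsTo_omegaStar hTc hTs)
      (htc.omegaStar_nonempty hTc hTs) hP) hnp
  push Not at hP
  obtain ⟨c, hc, b, ε, hε, hcb⟩ := hP
  exact ⟨ε / 2, by positivity,
    fun U hU => thickSet_STset_of_mem_closure hTc hU (mem_iInter.1 hc ⟨U, hU⟩) hε hcb⟩

/-- Every transitive compact system that is not proximal is thickly sensitive. -/
theorem stmt1 {X : Type*} [MetricSpace X] [CompactSpace X] [Nontrivial X]
    (hperf : ∀ x : X, (𝓝[≠] x).NeBot)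
    {T : X → X} (hTc : Continuous T) (hTs : Function.Surjective T)
    (htc : TransCompact T) (hnp : ¬ ProximalSystem T) :
    ThicklySensitive T :=
  stmt1_general hTc hTs htc hnp
end

section
/- For a dynamical system (X,T), the following conditions are equivalent: (1) (X,T) is weakly mixing; (2) there is a dense subset X' ⊆ X such that x ∈ ω_{N_T}(x) for every x ∈ X'; (3) ω_{N_T}(x₀) = X for some point x₀ ∈ X; (4) there is a dense Gδ subset X'' ⊆ X such that ω_{N_T}(x) = X for every x ∈ X''. -/
open Filter Topology Set Metric

/-! Weak mixing is equivalent to the condition that `N(G,G) ∩ N(U,V) ≠ ∅` for all opene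
`G, U, V`: for the converse, pick `n ∈ N(A,B)` and apply the condition to `A ∩ T⁻ⁿB`, `C` and
`T⁻ⁿD`, which produces a common time `n + m ∈ N(A,B) ∩ N(C,D)`. A point `x ∈ G` and a time
`n ∈ N(x,G) ∩ N(U,V)` witness this condition, and such times exist both when `x ∈ ω_{N_T}(x)`
for a dense set of `x` and, after replacing `x₀` by `T^{n₁}x₀ ∈ G`, when `ω_{N_T}(x₀) = X`.
Under weak mixing each set `{x : N(x,G) ∩ N(U,V) ≠ ∅}` is open and dense, so intersecting over
a countable basis gives, by Baire's theorem, a dense `Gδ` set of points with `ω_{N_T}(x) = X`. -/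

section WeakMixing

variable {X : Type*} {T : X → X}

lemma iterate_prod_self (T : X → X) (n : ℕ) (p : X × X) :
    (fun p : X × X => (T p.1, T p.2))^[n] p = (T^[n] p.1, T^[n] p.2) :=
  congrFun (Prod.map_iterate T T n) p

lemma NTset_mono {U V U' V' : Set X} (hU : U ⊆ U') (hV : V ⊆ V') :
    NTset T U V ⊆ NTset T U' V' :=
  fun _ ⟨x, hxU, hxV⟩ => ⟨x, hU hxU, hV hxV⟩

lemma NTpt_mono {x : X} {G G' : Set X} (hG : G ⊆ G') : NTpt T x G ⊆ NTpt T x G' :=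
  fun _ hn => hG hn

lemma NTset_self_inter_nonempty_of_mem {x : X} {G U V : Set X} (hx : x ∈ G)
    (h : (NTpt T x G ∩ NTset T U V).Nonempty) : (NTset T G G ∩ NTset T U V).Nonempty :=
  let ⟨n, hnG, hnUV⟩ := h
  ⟨n, ⟨x, hx, hnG⟩, hnUV⟩

variable [TopologicalSpace X]

lemma Opene.preimage_iterate (hTc : Continuous T) (hTs : Function.Surjective T) {U : Set X}
    (hU : Opene U) (n : ℕ) : Opene (T^[n] ⁻¹' U) :=
  ⟨hU.1.preimage (hTc.iterate n), hU.2.preimage (hTs.iterate n)⟩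

lemma Opene.exists_prod_subset {W : Set (X × X)} (hW : Opene W) :
    ∃ A C : Set X, Opene A ∧ Opene C ∧ A ×ˢ C ⊆ W := by
  obtain ⟨⟨a, c⟩, hac⟩ := hW.2
  obtain ⟨A, C, hA, hC, ha, hc, hsub⟩ := isOpen_prod_iff.1 hW.1 a c hac
  exact ⟨A, C, ⟨hA, a, ha⟩, ⟨hC, c, hc⟩, hsub⟩

lemma NTset_inter_nonempty_of_weaklyMixing (hwm : WeaklyMixing T) {A B C D : Set X}
    (hA : Opene A) (hB : Opene B) (hC : Opene C) (hD : Opene D) :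
    (NTset T A B ∩ NTset T C D).Nonempty := by
  obtain ⟨n, p, ⟨hpA, hpC⟩, hp⟩ := hwm (A ×ˢ C) (B ×ˢ D)
    ⟨hA.1.prod hC.1, hA.2.prod hC.2⟩ ⟨hB.1.prod hD.1, hB.2.prod hD.2⟩
  rw [Set.mem_preimage, iterate_prod_self] at hp
  exact ⟨n, ⟨p.1, hpA, hp.1⟩, ⟨p.2, hpC, hp.2⟩⟩

theorem weaklyMixing_iff_NTset_self_inter_nonempty (hTc : Continuous T)
    (hTs : Function.Surjective T) :
    WeaklyMixing T ↔ ∀ G U V : Set X, Opene G → Opene U → Opene V →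
      (NTset T G G ∩ NTset T U V).Nonempty := by
  refine ⟨fun hwm G U V hG hU hV => NTset_inter_nonempty_of_weaklyMixing hwm hG hG hU hV,
    fun h 𝒰 𝒱 h𝒰 h𝒱 => ?_⟩
  obtain ⟨A, C, hA, hC, hAC⟩ := h𝒰.exists_prod_subset
  obtain ⟨B, D, hB, hD, hBD⟩ := h𝒱.exists_prod_subset
  obtain ⟨n, -, hn⟩ := h A A B hA hA hB
  obtain ⟨m, ⟨z, hzA, hz⟩, ⟨w, hwC, hw⟩⟩ :=
    h (A ∩ T^[n] ⁻¹' B) C (T^[n] ⁻¹' D) ⟨hA.1.inter (hB.1.preimage (hTc.iterate n)), hn⟩ hC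
      (hD.preimage_iterate hTc hTs n)
  refine ⟨n + m, (z, w), hAC ⟨hzA.1, hwC⟩, ?_⟩
  rw [Set.mem_preimage, iterate_prod_self, Function.iterate_add_apply,
    Function.iterate_add_apply]
  exact hBD ⟨hz.2, hw⟩

lemma omegaNT_eq_univ_iff {x : X} :
    omegaNT T x = Set.univ ↔ ∀ G U V : Set X, Opene G → Opene U → Opene V →
      (NTpt T x G ∩ NTset T U V).Nonempty := by
  refine ⟨fun h G U V hG hU hV => ?_, fun h => Set.eq_univ_of_forall
    fun _ G hG hzG U V hU hV => h G U V ⟨hG, _, hzG⟩ hU hV⟩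
  obtain ⟨z, hz⟩ := hG.2
  exact (h ▸ Set.mem_univ z : z ∈ omegaNT T x) G hG.1 hz U V hU hV

lemma NTset_self_inter_nonempty_of_dense {X' : Set X} (hd : Dense X')
    (hX' : ∀ x ∈ X', x ∈ omegaNT T x) {G U V : Set X}
    (hG : Opene G) (hU : Opene U) (hV : Opene V) : (NTset T G G ∩ NTset T U V).Nonempty := by
  obtain ⟨x, hxX', hxG⟩ := hd.exists_mem_open hG.1 hG.2
  exact NTset_self_inter_nonempty_of_mem hxG (hX' x hxX' G hG.1 hxG U V hU hV)

lemma NTset_self_inter_nonempty_of_omegaNT_eq_univ (hTc : Continuous T)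
    (hTs : Function.Surjective T) {x₀ : X} (hx₀ : omegaNT T x₀ = Set.univ) {G U V : Set X}
    (hG : Opene G) (hU : Opene U) (hV : Opene V) : (NTset T G G ∩ NTset T U V).Nonempty := by
  rw [omegaNT_eq_univ_iff] at hx₀
  obtain ⟨n₁, hn₁, -⟩ := hx₀ G U V hG hU hV
  obtain ⟨n₂, hn₂, hn₂UV⟩ := hx₀ _ U V (hG.preimage_iterate hTc hTs n₁) hU hV
  refine NTset_self_inter_nonempty_of_mem hn₁ ⟨n₂, ?_, hn₂UV⟩
  show T^[n₂] (T^[n₁] x₀) ∈ G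
  rw [← Function.iterate_add_apply, add_comm, Function.iterate_add_apply]
  exact hn₂

lemma isOpen_setOf_NTpt_inter_NTset_nonempty (hTc : Continuous T) {G : Set X} (hG : IsOpen G)
    (U V : Set X) : IsOpen {x | (NTpt T x G ∩ NTset T U V).Nonempty} := by
  have : {x | (NTpt T x G ∩ NTset T U V).Nonempty} = ⋃ n ∈ NTset T U V, T^[n] ⁻¹' G := by
    ext x
    simp only [Set.mem_ofPred_eq, Set.mem_iUnion, Set.mem_preimage, exists_prop]
    exact ⟨fun ⟨n, hnG, hnUV⟩ => ⟨n, hnUV, hnG⟩, fun ⟨n, hnUV, hnG⟩ => ⟨n, hnG, hnUV⟩⟩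
  rw [this]
  exact isOpen_biUnion fun n _ => hG.preimage (hTc.iterate n)

lemma dense_setOf_NTpt_inter_NTset_nonempty (hwm : WeaklyMixing T) {G U V : Set X}
    (hG : Opene G) (hU : Opene U) (hV : Opene V) :
    Dense {x | (NTpt T x G ∩ NTset T U V).Nonempty} := by
  refine dense_iff_inter_open.2 fun O hO hOne => ?_
  obtain ⟨n, ⟨x, hxO, hxG⟩, hnUV⟩ := NTset_inter_nonempty_of_weaklyMixing hwm ⟨hO, hOne⟩ hG hU hV
  exact ⟨x, hxO, n, hxG, hnUV⟩

lemma setOf_omegaNT_eq_univ_mem_residual [SecondCountableTopology X] (hTc : Continuous T)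
    (hwm : WeaklyMixing T) : {x | omegaNT T x = Set.univ} ∈ residual X := by
  obtain ⟨b, hbc, hbne, hb⟩ := TopologicalSpace.exists_countable_basis X
  have hopene : ∀ s ∈ b, Opene s := fun s hs =>
    ⟨hb.isOpen hs, Set.nonempty_iff_ne_empty.2 fun h => hbne (h ▸ hs)⟩
  have shrink : ∀ O : Set X, Opene O → ∃ O₀ ∈ b, O₀ ⊆ O := fun O hO =>
    let ⟨_, hz⟩ := hO.2
    let ⟨O₀, hO₀, _, hsub⟩ := hb.exists_subset_of_mem_open hz hO.1
    ⟨O₀, hO₀, hsub⟩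
  have hres : ⋂ p ∈ b ×ˢ b ×ˢ b, {x | (NTpt T x p.1 ∩ NTset T p.2.1 p.2.2).Nonempty}
      ∈ residual X :=
    (countable_bInter_mem (hbc.prod (hbc.prod hbc))).2 fun p ⟨hG, hU, hV⟩ =>
      residual_of_dense_open (isOpen_setOf_NTpt_inter_NTset_nonempty hTc (hb.isOpen hG) _ _)
        (dense_setOf_NTpt_inter_NTset_nonempty hwm (hopene _ hG) (hopene _ hU) (hopene _ hV))
  refine Filter.mem_of_superset hres fun x hx => omegaNT_eq_univ_iff.2 fun G U V hG hU hV => ?_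
  obtain ⟨G₀, hG₀, hG₀G⟩ := shrink G hG
  obtain ⟨U₀, hU₀, hU₀U⟩ := shrink U hU
  obtain ⟨V₀, hV₀, hV₀V⟩ := shrink V hV
  exact (Set.mem_iInter₂.1 hx (G₀, U₀, V₀) ⟨hG₀, hU₀, hV₀⟩).mono
    (Set.inter_subset_inter (NTpt_mono hG₀G) (NTset_mono hU₀U hV₀V))

end WeakMixing

theorem stmt7_general {X : Type*} [MetricSpace X] [CompactSpace X] [Nontrivial X]
    {T : X → X} (hTc : Continuous T) (hTs : Function.Surjective T) :
    (WeaklyMixing T ↔ ∃ X' : Set X, Dense X' ∧ ∀ x ∈ X', x ∈ omegaNT T x) ∧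
    (WeaklyMixing T ↔ ∃ x₀ : X, omegaNT T x₀ = Set.univ) ∧
    (WeaklyMixing T ↔ ∃ X'' : Set X, Dense X'' ∧ IsGδ X'' ∧
      ∀ x ∈ X'', omegaNT T x = Set.univ) := by
  have wm_iff := weaklyMixing_iff_NTset_self_inter_nonempty hTc hTs
  have h₁₄ : WeaklyMixing T → ∃ X'' : Set X, Dense X'' ∧ IsGδ X'' ∧
      ∀ x ∈ X'', omegaNT T x = Set.univ := fun hwm =>
    let ⟨X'', hsub, hGδ, hd⟩ := mem_residual.1 (setOf_omegaNT_eq_univ_mem_residual hTc hwm)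
    ⟨X'', hd, hGδ, hsub⟩
  have h₄₃ : (∃ X'' : Set X, Dense X'' ∧ IsGδ X'' ∧ ∀ x ∈ X'', omegaNT T x = Set.univ) →
      ∃ x₀ : X, omegaNT T x₀ = Set.univ := fun ⟨_, hd, _, h⟩ => hd.nonempty.imp h
  have h₄₂ : (∃ X'' : Set X, Dense X'' ∧ IsGδ X'' ∧ ∀ x ∈ X'', omegaNT T x = Set.univ) →
      ∃ X' : Set X, Dense X' ∧ ∀ x ∈ X', x ∈ omegaNT T x :=
    fun ⟨X'', hd, _, h⟩ => ⟨X'', hd, fun x hx => h x hx ▸ Set.mem_univ x⟩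
  have h₂₁ : (∃ X' : Set X, Dense X' ∧ ∀ x ∈ X', x ∈ omegaNT T x) → WeaklyMixing T :=
    fun ⟨_, hd, hX'⟩ => wm_iff.2 fun _ _ _ => NTset_self_inter_nonempty_of_dense hd hX'
  have h₃₁ : (∃ x₀ : X, omegaNT T x₀ = Set.univ) → WeaklyMixing T := fun ⟨_, hx₀⟩ =>
    wm_iff.2 fun _ _ _ => NTset_self_inter_nonempty_of_omegaNT_eq_univ hTc hTs hx₀
  exact ⟨⟨h₄₂ ∘ h₁₄, h₂₁⟩, ⟨h₄₃ ∘ h₁₄, h₃₁⟩, ⟨h₁₄, h₃₁ ∘ h₄₃⟩⟩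

/-- Equivalent characterizations of weak mixing via `ω_{N_T}`-limit sets. -/
theorem stmt7 {X : Type*} [MetricSpace X] [CompactSpace X] [Nontrivial X]
    (hperf : ∀ x : X, (𝓝[≠] x).NeBot)
    {T : X → X} (hTc : Continuous T) (hTs : Function.Surjective T) :
    (WeaklyMixing T ↔ ∃ X' : Set X, Dense X' ∧ ∀ x ∈ X', x ∈ omegaNT T x) ∧
    (WeaklyMixing T ↔ ∃ x₀ : X, omegaNT T x₀ = Set.univ) ∧
    (WeaklyMixing T ↔ ∃ X'' : Set X, Dense X'' ∧ IsGδ X'' ∧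
      ∀ x ∈ X'', omegaNT T x = Set.univ) :=
  stmt7_general hTc hTs
end
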